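/- Let f = (x² − y²)(x² − z²)(y² − z²) ∈ ℂ[x,y,z] and S = ℂ[x,y,z]. For this degree-6 plane curve (a line arrangement), the space AR(f)₃ of degree-3 relations (a,b,c) ∈ (S₃)³ with a·f_x + b·f_y + c·f_z = 0 has dimension 4. -/

import Mathlib

open MvPolynomial Module

variable (n : ℕ)

/-- The subspace of tuples all of whose components are homogeneous of degree `m`. -/
noncomputable def degTuples (m : ℕ) :
    Submodule ℂ (Fin (n + 1) → MvPolynomial (Fin (n + 1)) ℂ) :=
  ⨅ i, (homogeneousSubmodule (Fin (n + 1)) ℂ m).comap (LinearMap.proj i)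

/-- The `ℂ`-linear map `(a₀,…,aₙ) ↦ ∑ᵢ aᵢ · f_{xᵢ}`. -/
noncomputable def relMap (f : MvPolynomial (Fin (n + 1)) ℂ) :
    (Fin (n + 1) → MvPolynomial (Fin (n + 1)) ℂ) →ₗ[ℂ] MvPolynomial (Fin (n + 1)) ℂ :=
  ∑ i : Fin (n + 1), (LinearMap.mulRight ℂ (pderiv i f)).comp (LinearMap.proj i)

/-- `AR(f)_m`: degree-`m` relations among the partial derivatives of `f`. -/
noncomputable def ARm (f : MvPolynomial (Fin (n + 1)) ℂ) (m : ℕ) :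
    Submodule ℂ (Fin (n + 1) → MvPolynomial (Fin (n + 1)) ℂ) :=
  degTuples n m ⊓ LinearMap.ker (relMap n f)

/-- The Koszul tuple with `f_{xⱼ}` in position `i` and `−f_{xᵢ}` in position `j`. -/
noncomputable def kosTuple (f : MvPolynomial (Fin (n + 1)) ℂ) (i j : Fin (n + 1)) :
    Fin (n + 1) → MvPolynomial (Fin (n + 1)) ℂ :=
  fun k => if k = i then pderiv j f else if k = j then -(pderiv i f) else 0

/-- `KR(f)`: the `S`-submodule generated by the Koszul relations. -/
noncomputable def KRsub (f : MvPolynomial (Fin (n + 1)) ℂ) :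
    Submodule (MvPolynomial (Fin (n + 1)) ℂ) (Fin (n + 1) → MvPolynomial (Fin (n + 1)) ℂ) :=
  Submodule.span _ {v | ∃ i j, i ≠ j ∧ v = kosTuple n f i j}

/-- `KR(f)_m`: the degree-`m` part of the Koszul relations. -/
noncomputable def KRm (f : MvPolynomial (Fin (n + 1)) ℂ) (m : ℕ) :
    Submodule ℂ (Fin (n + 1) → MvPolynomial (Fin (n + 1)) ℂ) :=
  degTuples n m ⊓ (KRsub n f).restrictScalars ℂ

/-- `dim ER(f)_m = dim (AR(f)_m / KR(f)_m)`. -/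
noncomputable def erDim (f : MvPolynomial (Fin (n + 1)) ℂ) (m : ℕ) : ℕ :=
  finrank ℂ (ARm n f m ⧸ (KRm n f m).comap (ARm n f m).subtype)

/-- The Jacobian ideal of `f`. -/
noncomputable def jacIdeal (f : MvPolynomial (Fin (n + 1)) ℂ) :
    Ideal (MvPolynomial (Fin (n + 1)) ℂ) :=
  Ideal.span (Set.range fun i => pderiv i f)

/-- `dim M(f)_k`: the dimension of the degree-`k` part of the Milnor algebra `S/J_f`. -/
noncomputable def milnorDim (f : MvPolynomial (Fin (n + 1)) ℂ) (k : ℕ) : ℕ :=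
  finrank ℂ ((homogeneousSubmodule (Fin (n + 1)) ℂ k).map
    (Ideal.Quotient.mkₐ ℂ (jacIdeal n f)).toLinearMap)

section AuxAR3

set_option maxHeartbeats 4000000

private lemma fsl1 : ((0 : Fin 9).succ : Fin 10) = 1 := rfl
private lemma fsl2 : ((0 : Fin 8).succ.succ : Fin 10) = 2 := rfl
private lemma fsl3 : ((0 : Fin 7).succ.succ.succ : Fin 10) = 3 := rfl
private lemma fsl4 : ((0 : Fin 6).succ.succ.succ.succ : Fin 10) = 4 := rfl
private lemma fsl5 : ((0 : Fin 5).succ.succ.succ.succ.succ : Fin 10) = 5 := rfl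
private lemma fsl6 : ((0 : Fin 4).succ.succ.succ.succ.succ.succ : Fin 10) = 6 := rfl
private lemma fsl7 : ((0 : Fin 3).succ.succ.succ.succ.succ.succ.succ : Fin 10) = 7 := rfl
private lemma fsl8 : ((0 : Fin 2).succ.succ.succ.succ.succ.succ.succ.succ : Fin 10) = 8 := rfl
private lemma fsl9 : ((0 : Fin 1).succ.succ.succ.succ.succ.succ.succ.succ.succ : Fin 10) = 9 := rfl

/-- The ten degree-3 monomials in three variables. -/
private noncomputable def mono3 : Fin 10 → MvPolynomial (Fin 3) ℂ :=
  ![X 0^3, X 0^2*X 1^1, X 0^2*X 2^1, X 0^1*X 1^2, X 0^1*X 1^1*X 2^1,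
    X 0^1*X 2^2, X 1^3, X 1^2*X 2^1, X 1^1*X 2^2, X 2^3]

private lemma classify3 (d : Fin 3 →₀ ℕ) (hd : d 0 + d 1 + d 2 = 3) :
    d = Finsupp.single 0 3 ∨ d = Finsupp.single 0 2 + Finsupp.single 1 1 ∨
    d = Finsupp.single 0 2 + Finsupp.single 2 1 ∨
    d = Finsupp.single 0 1 + Finsupp.single 1 2 ∨
    d = Finsupp.single 0 1 + (Finsupp.single 1 1 + Finsupp.single 2 1) ∨
    d = Finsupp.single 0 1 + Finsupp.single 2 2 ∨
    d = Finsupp.single 1 3 ∨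
    d = Finsupp.single 1 2 + Finsupp.single 2 1 ∨
    d = Finsupp.single 1 1 + Finsupp.single 2 2 ∨
    d = Finsupp.single 2 3 := by
  have hrep : d = Finsupp.single 0 (d 0) + Finsupp.single 1 (d 1) + Finsupp.single 2 (d 2) := by
    ext i; fin_cases i <;> simp [Finsupp.single_apply]
  set k0 := d 0 with hk0
  set k1 := d 1 with hk1
  set k2 := d 2 with hk2
  clear_value k0 k1 k2
  clear hk0 hk1 hk2
  have b0 : k0 ≤ 3 := by omega
  have b1 : k1 ≤ 3 := by omega
  have b2 : k2 ≤ 3 := by omega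
  interval_cases k0 <;> interval_cases k1 <;> interval_cases k2 <;> simp_all [add_assoc]

private lemma rep3 (p : MvPolynomial (Fin 3) ℂ) (hp : p.IsHomogeneous 3) :
    ∃ c : Fin 10 → ℂ, ∑ i, c i • mono3 i = p := by
  rw [← Submodule.mem_span_range_iff_exists_fun]
  rw [← support_sum_monomial_coeff p]
  apply Submodule.sum_mem
  intro d hd
  have hsum : d 0 + d 1 + d 2 = 3 := by
    have := hp (MvPolynomial.mem_support_iff.mp hd)
    simpa [Finsupp.weight_apply, Finsupp.sum_fintype, Fin.sum_univ_three] using this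
  have key : ∀ (e : Fin 3 →₀ ℕ) (i : Fin 10) (c : ℂ), monomial e c = c • mono3 i →
      (monomial e c : MvPolynomial (Fin 3) ℂ) ∈ Submodule.span ℂ (Set.range mono3) := by
    intro e i c h
    rw [h]; exact Submodule.smul_mem _ _ (Submodule.subset_span ⟨i, rfl⟩)
  rcases classify3 d hsum with h|h|h|h|h|h|h|h|h|h <;> rw [h]
  · exact key _ 0 _ (by show _ = _ • (X 0^3 : MvPolynomial (Fin 3) ℂ); simp only [X_pow_eq_monomial, monomial_mul, smul_monomial, one_mul, mul_one, smul_eq_mul])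
  · exact key _ 1 _ (by show _ = _ • (X 0^2*X 1^1 : MvPolynomial (Fin 3) ℂ); simp only [X_pow_eq_monomial, monomial_mul, smul_monomial, one_mul, mul_one, smul_eq_mul])
  · exact key _ 2 _ (by show _ = _ • (X 0^2*X 2^1 : MvPolynomial (Fin 3) ℂ); simp only [X_pow_eq_monomial, monomial_mul, smul_monomial, one_mul, mul_one, smul_eq_mul])
  · exact key _ 3 _ (by show _ = _ • (X 0^1*X 1^2 : MvPolynomial (Fin 3) ℂ); simp only [X_pow_eq_monomial, monomial_mul, smul_monomial, one_mul, mul_one, smul_eq_mul])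
  · exact key _ 4 _ (by show _ = _ • (X 0^1*X 1^1*X 2^1 : MvPolynomial (Fin 3) ℂ); simp only [X_pow_eq_monomial, monomial_mul, smul_monomial, one_mul, mul_one, smul_eq_mul, add_assoc])
  · exact key _ 5 _ (by show _ = _ • (X 0^1*X 2^2 : MvPolynomial (Fin 3) ℂ); simp only [X_pow_eq_monomial, monomial_mul, smul_monomial, one_mul, mul_one, smul_eq_mul])
  · exact key _ 6 _ (by show _ = _ • (X 1^3 : MvPolynomial (Fin 3) ℂ); simp only [X_pow_eq_monomial, monomial_mul, smul_monomial, one_mul, mul_one, smul_eq_mul])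
  · exact key _ 7 _ (by show _ = _ • (X 1^2*X 2^1 : MvPolynomial (Fin 3) ℂ); simp only [X_pow_eq_monomial, monomial_mul, smul_monomial, one_mul, mul_one, smul_eq_mul])
  · exact key _ 8 _ (by show _ = _ • (X 1^1*X 2^2 : MvPolynomial (Fin 3) ℂ); simp only [X_pow_eq_monomial, monomial_mul, smul_monomial, one_mul, mul_one, smul_eq_mul])
  · exact key _ 9 _ (by show _ = _ • (X 2^3 : MvPolynomial (Fin 3) ℂ); simp only [X_pow_eq_monomial, monomial_mul, smul_monomial, one_mul, mul_one, smul_eq_mul])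

private lemma homXYZ (a b c : ℕ) (h : a + b + c = 3) :
    (X 0^a * X 1^b * X 2^c : MvPolynomial (Fin 3) ℂ).IsHomogeneous 3 := by
  simp only [X_pow_eq_monomial, monomial_mul, mul_one]
  apply isHomogeneous_monomial
  rw [Finsupp.degree_eq_weight_one]
  simp [Finsupp.weight_apply, Finsupp.sum_fintype, Fin.sum_univ_three, Finsupp.single_apply, h]

/-- The four generating syzygies. -/
private noncomputable def Wgen : Fin 4 → (Fin 3 → MvPolynomial (Fin 3) ℂ) :=
  ![![X 0^1*X 1^1*X 2^1, X 0^2*X 2^1, X 0^2*X 1^1],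
    ![X 1^2*X 2^1, X 0^1*X 1^1*X 2^1, X 0^1*X 1^2],
    ![X 1^1*X 2^2, X 0^1*X 2^2, X 0^1*X 1^1*X 2^1],
    ![X 0^3 - 2*(X 0^1*X 1^2) - 2*(X 0^1*X 2^2),
      X 1^3 - 2*(X 0^2*X 1^1) - 2*(X 1^1*X 2^2),
      X 2^3 - 2*(X 0^2*X 2^1) - 2*(X 1^2*X 2^1)]]

private lemma two_mul_eq_smul (p : MvPolynomial (Fin 3) ℂ) : (2 : MvPolynomial (Fin 3) ℂ) * p = (2:ℂ) • p := by
  rw [smul_eq_C_mul, map_ofNat]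

end AuxAR3

set_option maxHeartbeats 4000000 in
/-- For the sextic line arrangement `f = (x²−y²)(x²−z²)(y²−z²)` in `ℂ[x,y,z]`,
the space `AR(f)₃` of degree-3 Jacobian syzygies has dimension `4`. -/
theorem dim_AR3_line_arrangement
    (f : MvPolynomial (Fin 3) ℂ)
    (hf : f = (X 0 ^ 2 - X 1 ^ 2) * (X 0 ^ 2 - X 2 ^ 2) * (X 1 ^ 2 - X 2 ^ 2)) :
    finrank ℂ (ARm 2 f 3) = 4 := by
  have hfx : pderiv (0 : Fin 3) f = 4*X 0^3*X 1^2 - 4*X 0^3*X 2^2 + 2*X 0*X 2^4 - 2*X 0*X 1^4 := by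
    rw [hf]
    simp only [map_sub, map_add, map_mul, Derivation.leibniz, Derivation.leibniz_pow,
      pderiv_X_self, pderiv_X_of_ne (by decide : (1:Fin 3) ≠ 0), pderiv_X_of_ne (by decide : (2:Fin 3) ≠ 0),
      smul_eq_mul]
    ring
  have hfy : pderiv (1 : Fin 3) f = 2*X 0^4*X 1 - 4*X 0^2*X 1^3 + 4*X 1^3*X 2^2 - 2*X 1*X 2^4 := by
    rw [hf]
    simp only [map_sub, map_add, map_mul, Derivation.leibniz, Derivation.leibniz_pow,
      pderiv_X_self, pderiv_X_of_ne (by decide : (0:Fin 3) ≠ 1), pderiv_X_of_ne (by decide : (2:Fin 3) ≠ 1),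
      smul_eq_mul]
    ring
  have hfz : pderiv (2 : Fin 3) f = -2*X 0^4*X 2 + 4*X 0^2*X 2^3 + 2*X 1^4*X 2 - 4*X 1^2*X 2^3 := by
    rw [hf]
    simp only [map_sub, map_add, map_mul, Derivation.leibniz, Derivation.leibniz_pow,
      pderiv_X_self, pderiv_X_of_ne (by decide : (0:Fin 3) ≠ 2), pderiv_X_of_ne (by decide : (1:Fin 3) ≠ 2),
      smul_eq_mul]
    ring
  have relap : ∀ w : Fin 3 → MvPolynomial (Fin 3) ℂ,
      relMap 2 f w = w 0 * pderiv 0 f + w 1 * pderiv 1 f + w 2 * pderiv 2 f := by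
    intro w
    simp [relMap, Fin.sum_univ_three]
  -- each generator is a syzygy
  have hAR : ∀ j, Wgen j ∈ ARm 2 f 3 := by
    have hh : ∀ j, Wgen j ∈ degTuples 2 3 := by
      have base : ∀ (a b c : ℕ), a + b + c = 3 →
          (X 0^a * X 1^b * X 2^c : MvPolynomial (Fin 3) ℂ) ∈ homogeneousSubmodule (Fin 3) ℂ 3 :=
        fun a b c h => (mem_homogeneousSubmodule _ _).mpr (homXYZ a b c h)
      have h00 : (X 0^1*X 1^1*X 2^1 : MvPolynomial (Fin 3) ℂ) ∈ homogeneousSubmodule (Fin 3) ℂ 3 := by simpa using base 1 1 1 rfl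
      have h01 : (X 0^2*X 2^1 : MvPolynomial (Fin 3) ℂ) ∈ homogeneousSubmodule (Fin 3) ℂ 3 := by simpa using base 2 0 1 rfl
      have h02 : (X 0^2*X 1^1 : MvPolynomial (Fin 3) ℂ) ∈ homogeneousSubmodule (Fin 3) ℂ 3 := by simpa using base 2 1 0 rfl
      have h10 : (X 1^2*X 2^1 : MvPolynomial (Fin 3) ℂ) ∈ homogeneousSubmodule (Fin 3) ℂ 3 := by simpa using base 0 2 1 rfl
      have h12 : (X 0^1*X 1^2 : MvPolynomial (Fin 3) ℂ) ∈ homogeneousSubmodule (Fin 3) ℂ 3 := by simpa using base 1 2 0 rfl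
      have h20 : (X 1^1*X 2^2 : MvPolynomial (Fin 3) ℂ) ∈ homogeneousSubmodule (Fin 3) ℂ 3 := by simpa using base 0 1 2 rfl
      have h21 : (X 0^1*X 2^2 : MvPolynomial (Fin 3) ℂ) ∈ homogeneousSubmodule (Fin 3) ℂ 3 := by simpa using base 1 0 2 rfl
      have h30 : (X 0^3 - 2*(X 0^1*X 1^2) - 2*(X 0^1*X 2^2) : MvPolynomial (Fin 3) ℂ) ∈ homogeneousSubmodule (Fin 3) ℂ 3 := by
        rw [two_mul_eq_smul, two_mul_eq_smul]
        refine Submodule.sub_mem _ (Submodule.sub_mem _ ?_ (Submodule.smul_mem _ _ h12)) (Submodule.smul_mem _ _ h21)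
        simpa using base 3 0 0 rfl
      have h31 : (X 1^3 - 2*(X 0^2*X 1^1) - 2*(X 1^1*X 2^2) : MvPolynomial (Fin 3) ℂ) ∈ homogeneousSubmodule (Fin 3) ℂ 3 := by
        rw [two_mul_eq_smul, two_mul_eq_smul]
        refine Submodule.sub_mem _ (Submodule.sub_mem _ ?_ (Submodule.smul_mem _ _ h02)) (Submodule.smul_mem _ _ h20)
        simpa using base 0 3 0 rfl
      have h32 : (X 2^3 - 2*(X 0^2*X 2^1) - 2*(X 1^2*X 2^1) : MvPolynomial (Fin 3) ℂ) ∈ homogeneousSubmodule (Fin 3) ℂ 3 := by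
        rw [two_mul_eq_smul, two_mul_eq_smul]
        refine Submodule.sub_mem _ (Submodule.sub_mem _ ?_ (Submodule.smul_mem _ _ h01)) (Submodule.smul_mem _ _ h10)
        simpa using base 0 0 3 rfl
      intro j
      simp only [degTuples, Submodule.mem_iInf, Submodule.mem_comap, LinearMap.proj_apply]
      intro i
      fin_cases j <;> fin_cases i <;>
        simp only [Wgen, Matrix.cons_val_zero, Matrix.cons_val_one, Matrix.head_cons,
          Matrix.cons_val_two, Matrix.tail_cons, Matrix.cons_val_three, Fin.reduceFinMk, Fin.zero_eta,
          Fin.mk_one, Fin.isValue, Matrix.cons_val]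
      exacts [h00, h01, h02, h10, h00, h12, h20, h21, h00, h30, h31, h32]
    have hk : ∀ j, Wgen j ∈ LinearMap.ker (relMap 2 f) := by
      have k0 : relMap 2 f ![X 0^1*X 1^1*X 2^1, X 0^2*X 2^1, X 0^2*X 1^1] = 0 := by
        rw [relap]
        show (X 0^1*X 1^1*X 2^1) * _ + (X 0^2*X 2^1) * _ + (X 0^2*X 1^1) * _ = 0
        rw [hfx, hfy, hfz]; ring
      have k1 : relMap 2 f ![X 1^2*X 2^1, X 0^1*X 1^1*X 2^1, X 0^1*X 1^2] = 0 := by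
        rw [relap]
        show (X 1^2*X 2^1) * _ + (X 0^1*X 1^1*X 2^1) * _ + (X 0^1*X 1^2) * _ = 0
        rw [hfx, hfy, hfz]; ring
      have k2 : relMap 2 f ![X 1^1*X 2^2, X 0^1*X 2^2, X 0^1*X 1^1*X 2^1] = 0 := by
        rw [relap]
        show (X 1^1*X 2^2) * _ + (X 0^1*X 2^2) * _ + (X 0^1*X 1^1*X 2^1) * _ = 0
        rw [hfx, hfy, hfz]; ring
      have k3 : relMap 2 f ![X 0^3 - 2*(X 0^1*X 1^2) - 2*(X 0^1*X 2^2),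
          X 1^3 - 2*(X 0^2*X 1^1) - 2*(X 1^1*X 2^2),
          X 2^3 - 2*(X 0^2*X 2^1) - 2*(X 1^2*X 2^1)] = 0 := by
        rw [relap]
        show (X 0^3 - 2*(X 0^1*X 1^2) - 2*(X 0^1*X 2^2)) * _ + (X 1^3 - 2*(X 0^2*X 1^1) - 2*(X 1^1*X 2^2)) * _ + (X 2^3 - 2*(X 0^2*X 2^1) - 2*(X 1^2*X 2^1)) * _ = 0
        rw [hfx, hfy, hfz]; ring
      intro j
      fin_cases j
      · exact LinearMap.mem_ker.mpr k0
      · exact LinearMap.mem_ker.mpr k1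
      · exact LinearMap.mem_ker.mpr k2
      · exact LinearMap.mem_ker.mpr k3
    exact fun j => Submodule.mem_inf.mpr ⟨hh j, hk j⟩
  -- the span equals ARm
  have hspan : ARm 2 f 3 = Submodule.span ℂ (Set.range Wgen) := by
    apply le_antisymm
    · intro u hu
      have hu' : u ∈ degTuples 2 3 ⊓ LinearMap.ker (relMap 2 f) := hu
      obtain ⟨hdg, hkr⟩ := Submodule.mem_inf.mp hu'
      have hdeg : ∀ i : Fin 3, (u i).IsHomogeneous 3 := by
        intro i
        have h1 : u ∈ ⨅ i : Fin 3, (homogeneousSubmodule (Fin 3) ℂ 3).comap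
            (LinearMap.proj (R := ℂ) (φ := fun _ : Fin 3 => MvPolynomial (Fin 3) ℂ) i) := hdg
        have h2 := (Submodule.mem_iInf _).mp h1 i
        exact (mem_homogeneousSubmodule _ _).mp (Submodule.mem_comap.mp h2)
      obtain ⟨ca, ha⟩ := rep3 (u 0) (hdeg 0)
      obtain ⟨cb, hb⟩ := rep3 (u 1) (hdeg 1)
      obtain ⟨cc, hc⟩ := rep3 (u 2) (hdeg 2)
      have hrel : (∑ i, ca i • mono3 i) * (4*X 0^3*X 1^2 - 4*X 0^3*X 2^2 + 2*X 0*X 2^4 - 2*X 0*X 1^4)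
          + (∑ i, cb i • mono3 i) * (2*X 0^4*X 1 - 4*X 0^2*X 1^3 + 4*X 1^3*X 2^2 - 2*X 1*X 2^4)
          + (∑ i, cc i • mono3 i) * (-2*X 0^4*X 2 + 4*X 0^2*X 2^3 + 2*X 1^4*X 2 - 4*X 1^2*X 2^3) = 0 := by
        have h2 : relMap 2 f u = 0 := hkr
        rw [relap u, hfx, hfy, hfz, ← ha, ← hb, ← hc] at h2
        exact h2
      simp only [Fin.sum_univ_succ, Finset.univ_unique, Fin.default_eq_zero, Finset.sum_singleton,
        mono3, Matrix.cons_val_zero, Matrix.cons_val_succ, smul_eq_C_mul] at hrel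
      simp only [fsl1, fsl2, fsl3, fsl4, fsl5, fsl6, fsl7, fsl8, fsl9] at hrel
      have E1 := congrArg (eval ![(0 : ℂ), 1, 1]) hrel
      have E2 := congrArg (eval ![(1 : ℂ), 0, 1]) hrel
      have E3 := congrArg (eval ![(1 : ℂ), 1, 0]) hrel
      have E4 := congrArg (eval ![(0 : ℂ), 1, -1]) hrel
      have E5 := congrArg (eval ![(1 : ℂ), 0, -1]) hrel
      have E6 := congrArg (eval ![(1 : ℂ), -1, 0]) hrel
      have E7 := congrArg (eval ![(0 : ℂ), 1, 2]) hrel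
      have E8 := congrArg (eval ![(1 : ℂ), 0, 2]) hrel
      have E9 := congrArg (eval ![(1 : ℂ), 2, 0]) hrel
      have E10 := congrArg (eval ![(0 : ℂ), 1, -2]) hrel
      have E11 := congrArg (eval ![(1 : ℂ), 0, -2]) hrel
      have E12 := congrArg (eval ![(1 : ℂ), -2, 0]) hrel
      have E13 := congrArg (eval ![(0 : ℂ), 1, 3]) hrel
      have E14 := congrArg (eval ![(1 : ℂ), 0, 3]) hrel
      have E15 := congrArg (eval ![(1 : ℂ), 3, 0]) hrel
      have E16 := congrArg (eval ![(0 : ℂ), 1, -3]) hrel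
      have E17 := congrArg (eval ![(1 : ℂ), 0, -3]) hrel
      have E18 := congrArg (eval ![(0 : ℂ), 2, 1]) hrel
      have E19 := congrArg (eval ![(2 : ℂ), 0, 1]) hrel
      have E20 := congrArg (eval ![(2 : ℂ), 1, 0]) hrel
      have E21 := congrArg (eval ![(1 : ℂ), 1, 2]) hrel
      have E22 := congrArg (eval ![(1 : ℂ), 2, 1]) hrel
      have E23 := congrArg (eval ![(2 : ℂ), 1, 1]) hrel
      have E24 := congrArg (eval ![(1 : ℂ), -1, 2]) hrel
      have E25 := congrArg (eval ![(1 : ℂ), 2, -1]) hrel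
      have E26 := congrArg (eval ![(-1 : ℂ), 2, 1]) hrel
      simp only [map_add, map_mul, map_sub, map_neg, map_pow, map_ofNat, map_one, map_zero,
        eval_C, eval_X, Matrix.cons_val_zero, Matrix.cons_val_one, Matrix.head_cons,
        Matrix.cons_val_two, Matrix.tail_cons] at E1 E2 E3 E4 E5 E6 E7 E8 E9 E10 E11 E12 E13 E14 E15 E16 E17 E18 E19 E20 E21 E22 E23 E24 E25 E26
      have hk0 : ca 0 = (1 : ℂ) * cc 9 := by linear_combination (-61/288 : ℂ) * E2 + (-61/288 : ℂ) * E5 + (1/72 : ℂ) * E8 + (1/72 : ℂ) * E11 + (-1/864 : ℂ) * E14 + (-1/864 : ℂ) * E17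
      have hk1 : ca 1 = 0 := by linear_combination (1891/10080 : ℂ) * E1 + (1891/10080 : ℂ) * E2 + (499/2520 : ℂ) * E3 + (1891/10080 : ℂ) * E4 + (1891/10080 : ℂ) * E5 + (-1381/15120 : ℂ) * E6 + (-31/2520 : ℂ) * E7 + (-31/2520 : ℂ) * E8 + (-11/1890 : ℂ) * E9 + (-31/2520 : ℂ) * E10 + (-31/2520 : ℂ) * E11 + (17/6300 : ℂ) * E12 + (31/30240 : ℂ) * E13 + (31/30240 : ℂ) * E14 + (13/25200 : ℂ) * E15 + (31/30240 : ℂ) * E16 + (31/30240 : ℂ) * E17 + (29/9450 : ℂ) * E20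
      have hk2 : ca 2 = 0 := by linear_combination (-1/96 : ℂ) * E2 + (241/864 : ℂ) * E5 + (-7/1080 : ℂ) * E8 + (-3/200 : ℂ) * E11 + (11/21600 : ℂ) * E14 + (31/30240 : ℂ) * E17 + (-29/9450 : ℂ) * E19
      have hk3 : ca 3 = (-2 : ℂ) * cc 9 := by linear_combination (-427/1440 : ℂ) * E1 + (61/480 : ℂ) * E2 + (7/60 : ℂ) * E3 + (-427/1440 : ℂ) * E4 + (61/480 : ℂ) * E5 + (7/60 : ℂ) * E6 + (7/360 : ℂ) * E7 + (-1/120 : ℂ) * E8 + (-1/240 : ℂ) * E9 + (7/360 : ℂ) * E10 + (-1/120 : ℂ) * E11 + (-1/240 : ℂ) * E12 + (-7/4320 : ℂ) * E13 + (1/1440 : ℂ) * E14 + (-7/4320 : ℂ) * E16 + (1/1440 : ℂ) * E17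
      have hk4 : ca 4 = (1 : ℂ) * cc 1 := by linear_combination (-427/480 : ℂ) * E1 + (-31/240 : ℂ) * E2 + (-7/30 : ℂ) * E3 + (427/4320 : ℂ) * E4 + (-31/240 : ℂ) * E5 + (-7/30 : ℂ) * E6 + (7/270 : ℂ) * E7 + (1/60 : ℂ) * E8 + (1/120 : ℂ) * E9 + (1/60 : ℂ) * E11 + (1/120 : ℂ) * E12 + (-7/4320 : ℂ) * E13 + (-1/720 : ℂ) * E14 + (-1/4320 : ℂ) * E16 + (-1/720 : ℂ) * E17 + (11/540 : ℂ) * E18 + (-1/72 : ℂ) * E22 + (-1/72 : ℂ) * E26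
      have hk5 : ca 5 = (-2 : ℂ) * cc 9 := by linear_combination (1/96 : ℂ) * E2 + (1/96 : ℂ) * E5 + (-1/240 : ℂ) * E8 + (-1/240 : ℂ) * E11 + (1/1440 : ℂ) * E14 + (1/1440 : ℂ) * E17
      have hk6 : ca 6 = 0 := by linear_combination (-61/1680 : ℂ) * E1 + (-61/1680 : ℂ) * E2 + (-2/35 : ℂ) * E3 + (-61/1680 : ℂ) * E4 + (-61/1680 : ℂ) * E5 + (-37/1260 : ℂ) * E6 + (1/420 : ℂ) * E7 + (1/420 : ℂ) * E8 + (13/2520 : ℂ) * E9 + (1/420 : ℂ) * E10 + (1/420 : ℂ) * E11 + (1/1400 : ℂ) * E12 + (-1/5040 : ℂ) * E13 + (-1/5040 : ℂ) * E14 + (-1/2100 : ℂ) * E15 + (-1/5040 : ℂ) * E16 + (-1/5040 : ℂ) * E17 + (1/6300 : ℂ) * E20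
      have hk7 : ca 7 = (1 : ℂ) * cc 3 := by linear_combination (-119/480 : ℂ) * E1 + (61/480 : ℂ) * E2 + (7/60 : ℂ) * E3 + (-119/480 : ℂ) * E4 + (1/480 : ℂ) * E5 + (7/60 : ℂ) * E6 + (7/240 : ℂ) * E7 + (-1/120 : ℂ) * E8 + (-1/240 : ℂ) * E9 + (7/240 : ℂ) * E10 + (-1/120 : ℂ) * E11 + (-1/240 : ℂ) * E12 + (-1/480 : ℂ) * E13 + (1/1440 : ℂ) * E14 + (-1/480 : ℂ) * E16 + (1/1440 : ℂ) * E17 + (1/144 : ℂ) * E25 + (1/144 : ℂ) * E26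
      have hk8 : ca 8 = (1 : ℂ) * cc 4 := by linear_combination (653/1440 : ℂ) * E1 + (-247/1440 : ℂ) * E2 + (-73/360 : ℂ) * E3 + (653/1440 : ℂ) * E4 + (-247/1440 : ℂ) * E5 + (-53/2160 : ℂ) * E6 + (-1/18 : ℂ) * E7 + (7/360 : ℂ) * E8 + (-7/1080 : ℂ) * E9 + (-1/18 : ℂ) * E10 + (7/360 : ℂ) * E11 + (1/360 : ℂ) * E12 + (17/4320 : ℂ) * E13 + (-7/4320 : ℂ) * E14 + (1/720 : ℂ) * E15 + (17/4320 : ℂ) * E16 + (-7/4320 : ℂ) * E17 + (-1/270 : ℂ) * E20 + (-1/72 : ℂ) * E22 + (-1/72 : ℂ) * E25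
      have hk9 : ca 9 = 0 := by linear_combination (1/48 : ℂ) * E2 + (-1/144 : ℂ) * E5 + (-1/360 : ℂ) * E8 + (1/600 : ℂ) * E11 + (1/3600 : ℂ) * E14 + (-1/5040 : ℂ) * E17 + (-1/6300 : ℂ) * E19
      have hk10 : cb 0 = 0 := by linear_combination (61/280 : ℂ) * E1 + (61/280 : ℂ) * E2 + (-11/70 : ℂ) * E3 + (61/280 : ℂ) * E4 + (61/280 : ℂ) * E5 + (13/140 : ℂ) * E6 + (-1/70 : ℂ) * E7 + (-1/70 : ℂ) * E8 + (3/280 : ℂ) * E9 + (-1/70 : ℂ) * E10 + (-1/70 : ℂ) * E11 + (1/1400 : ℂ) * E12 + (1/840 : ℂ) * E13 + (1/840 : ℂ) * E14 + (-1/2100 : ℂ) * E15 + (1/840 : ℂ) * E16 + (1/840 : ℂ) * E17 + (1/175 : ℂ) * E20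
      have hk11 : cb 1 = (-2 : ℂ) * cc 9 := by linear_combination (-61/120 : ℂ) * E1 + (-61/720 : ℂ) * E2 + (-2/15 : ℂ) * E3 + (-61/120 : ℂ) * E4 + (-61/720 : ℂ) * E5 + (-2/15 : ℂ) * E6 + (1/30 : ℂ) * E7 + (1/180 : ℂ) * E8 + (-1/240 : ℂ) * E9 + (1/30 : ℂ) * E10 + (1/180 : ℂ) * E11 + (-1/240 : ℂ) * E12 + (-1/360 : ℂ) * E13 + (-1/2160 : ℂ) * E14 + (-1/360 : ℂ) * E16 + (-1/2160 : ℂ) * E17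
      have hk12 : cb 2 = (1 : ℂ) * cc 1 := by linear_combination (23/240 : ℂ) * E1 + (23/40 : ℂ) * E2 + (23/40 : ℂ) * E3 + (-91/720 : ℂ) * E4 + (-43/360 : ℂ) * E5 + (-43/360 : ℂ) * E6 + (1/90 : ℂ) * E7 + (-1/90 : ℂ) * E8 + (-1/90 : ℂ) * E9 + (1/60 : ℂ) * E10 + (-1/720 : ℂ) * E13 + (-1/720 : ℂ) * E16 + (-1/180 : ℂ) * E18 + (-1/90 : ℂ) * E19 + (-1/90 : ℂ) * E20 + (1/72 : ℂ) * E21 + (1/72 : ℂ) * E22 + (1/54 : ℂ) * E23 + (1/216 : ℂ) * E24 + (1/216 : ℂ) * E25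
      have hk13 : cb 3 = 0 := by linear_combination (-671/10080 : ℂ) * E1 + (-671/10080 : ℂ) * E2 + (121/2520 : ℂ) * E3 + (-671/10080 : ℂ) * E4 + (-671/10080 : ℂ) * E5 + (551/15120 : ℂ) * E6 + (11/2520 : ℂ) * E7 + (11/2520 : ℂ) * E8 + (-43/3780 : ℂ) * E9 + (11/2520 : ℂ) * E10 + (11/2520 : ℂ) * E11 + (17/6300 : ℂ) * E12 + (-11/30240 : ℂ) * E13 + (-11/30240 : ℂ) * E14 + (13/25200 : ℂ) * E15 + (-11/30240 : ℂ) * E16 + (-11/30240 : ℂ) * E17 + (-47/18900 : ℂ) * E20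
      have hk14 : cb 4 = (1 : ℂ) * cc 3 := by linear_combination (-109/480 : ℂ) * E1 + (53/240 : ℂ) * E2 + (29/120 : ℂ) * E3 + (-109/480 : ℂ) * E4 + (37/135 : ℂ) * E5 + (29/120 : ℂ) * E6 + (1/48 : ℂ) * E7 + (-37/1080 : ℂ) * E8 + (-1/240 : ℂ) * E9 + (1/48 : ℂ) * E10 + (-1/40 : ℂ) * E11 + (-1/240 : ℂ) * E12 + (-1/1440 : ℂ) * E13 + (1/270 : ℂ) * E14 + (-1/1440 : ℂ) * E16 + (1/432 : ℂ) * E17 + (-1/270 : ℂ) * E19 + (-1/72 : ℂ) * E21 + (-1/72 : ℂ) * E24 + (1/144 : ℂ) * E25 + (1/144 : ℂ) * E26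
      have hk15 : cb 5 = (1 : ℂ) * cc 4 := by linear_combination (-1/360 : ℂ) * E1 + (-377/720 : ℂ) * E2 + (-49/90 : ℂ) * E3 + (83/120 : ℂ) * E4 + (-127/720 : ℂ) * E5 + (-311/2160 : ℂ) * E6 + (-41/720 : ℂ) * E7 + (1/30 : ℂ) * E8 + (7/2160 : ℂ) * E9 + (-49/720 : ℂ) * E10 + (1/36 : ℂ) * E11 + (1/144 : ℂ) * E12 + (1/216 : ℂ) * E13 + (-1/432 : ℂ) * E14 + (1/720 : ℂ) * E15 + (1/216 : ℂ) * E16 + (-1/432 : ℂ) * E17 + (1/90 : ℂ) * E18 + (1/180 : ℂ) * E19 + (1/540 : ℂ) * E20 + (-1/72 : ℂ) * E21 + (-1/36 : ℂ) * E22 + (-1/108 : ℂ) * E23 + (1/216 : ℂ) * E24 + (-7/432 : ℂ) * E25 + (-1/144 : ℂ) * E26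
      have hk16 : cb 6 = (1 : ℂ) * cc 9 := by linear_combination (61/288 : ℂ) * E1 + (61/288 : ℂ) * E4 + (-1/72 : ℂ) * E7 + (-1/72 : ℂ) * E10 + (1/864 : ℂ) * E13 + (1/864 : ℂ) * E16
      have hk17 : cb 7 = 0 := by linear_combination (1/96 : ℂ) * E1 + (-241/864 : ℂ) * E4 + (7/1080 : ℂ) * E7 + (3/200 : ℂ) * E10 + (-11/21600 : ℂ) * E13 + (-31/30240 : ℂ) * E16 + (29/9450 : ℂ) * E18
      have hk18 : cb 8 = (-2 : ℂ) * cc 9 := by linear_combination (-1/96 : ℂ) * E1 + (-1/96 : ℂ) * E4 + (1/240 : ℂ) * E7 + (1/240 : ℂ) * E10 + (-1/1440 : ℂ) * E13 + (-1/1440 : ℂ) * E16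
      have hk19 : cb 9 = 0 := by linear_combination (-1/48 : ℂ) * E1 + (1/144 : ℂ) * E4 + (1/360 : ℂ) * E7 + (-1/600 : ℂ) * E10 + (-1/3600 : ℂ) * E13 + (1/5040 : ℂ) * E16 + (1/6300 : ℂ) * E18
      have hk20 : cc 0 = 0 := by linear_combination (3/8 : ℂ) * E2 + (1/8 : ℂ) * E5 + (-1/40 : ℂ) * E8 + (-3/200 : ℂ) * E11 + (1/600 : ℂ) * E14 + (1/840 : ℂ) * E17 + (-1/175 : ℂ) * E19
      have hk22 : cc 2 = (-2 : ℂ) * cc 9 := by linear_combination (7/144 : ℂ) * E2 + (7/144 : ℂ) * E5 + (7/720 : ℂ) * E8 + (7/720 : ℂ) * E11 + (-1/2160 : ℂ) * E14 + (-1/2160 : ℂ) * E17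
      have hk25 : cc 5 = 0 := by linear_combination (-11/96 : ℂ) * E2 + (-89/864 : ℂ) * E5 + (17/1080 : ℂ) * E8 + (1/600 : ℂ) * E11 + (-19/21600 : ℂ) * E14 + (-11/30240 : ℂ) * E17 + (47/18900 : ℂ) * E19
      have hk26 : cc 6 = 0 := by linear_combination (-3/8 : ℂ) * E1 + (-1/8 : ℂ) * E4 + (1/40 : ℂ) * E7 + (3/200 : ℂ) * E10 + (-1/600 : ℂ) * E13 + (-1/840 : ℂ) * E16 + (1/175 : ℂ) * E18
      have hk27 : cc 7 = (-2 : ℂ) * cc 9 := by linear_combination (-7/144 : ℂ) * E1 + (-7/144 : ℂ) * E4 + (-7/720 : ℂ) * E7 + (-7/720 : ℂ) * E10 + (1/2160 : ℂ) * E13 + (1/2160 : ℂ) * E16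
      have hk28 : cc 8 = 0 := by linear_combination (11/96 : ℂ) * E1 + (89/864 : ℂ) * E4 + (-17/1080 : ℂ) * E7 + (-1/600 : ℂ) * E10 + (19/21600 : ℂ) * E13 + (11/30240 : ℂ) * E16 + (-47/18900 : ℂ) * E18
      rw [Submodule.mem_span_range_iff_exists_fun]
      have comp0 : C (cc 1) * (X 0^1*X 1^1*X 2^1) + C (cc 3) * (X 1^2*X 2^1) + C (cc 4) * (X 1^1*X 2^2)
          + C (cc 9) * (X 0^3 - 2*(X 0^1*X 1^2) - 2*(X 0^1*X 2^2)) = u 0 := by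
        rw [← ha]
        simp only [Fin.sum_univ_succ, Finset.univ_unique, Fin.default_eq_zero, Finset.sum_singleton,
          mono3, Matrix.cons_val_zero, Matrix.cons_val_succ, smul_eq_C_mul]
        simp only [fsl1, fsl2, fsl3, fsl4, fsl5, fsl6, fsl7, fsl8, fsl9]
        rw [hk0 ,hk1 ,hk2 ,hk3 ,hk4 ,hk5 ,hk6 ,hk7 ,hk8 ,hk9]
        simp only [map_mul, map_neg, map_add, map_sub, map_ofNat, map_one, map_zero]
        ring
      have comp1 : C (cc 1) * (X 0^2*X 2^1) + C (cc 3) * (X 0^1*X 1^1*X 2^1) + C (cc 4) * (X 0^1*X 2^2)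
          + C (cc 9) * (X 1^3 - 2*(X 0^2*X 1^1) - 2*(X 1^1*X 2^2)) = u 1 := by
        rw [← hb]
        simp only [Fin.sum_univ_succ, Finset.univ_unique, Fin.default_eq_zero, Finset.sum_singleton,
          mono3, Matrix.cons_val_zero, Matrix.cons_val_succ, smul_eq_C_mul]
        simp only [fsl1, fsl2, fsl3, fsl4, fsl5, fsl6, fsl7, fsl8, fsl9]
        rw [hk10 ,hk11 ,hk12 ,hk13 ,hk14 ,hk15 ,hk16 ,hk17 ,hk18 ,hk19]
        simp only [map_mul, map_neg, map_add, map_sub, map_ofNat, map_one, map_zero]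
        ring
      have comp2 : C (cc 1) * (X 0^2*X 1^1) + C (cc 3) * (X 0^1*X 1^2) + C (cc 4) * (X 0^1*X 1^1*X 2^1)
          + C (cc 9) * (X 2^3 - 2*(X 0^2*X 2^1) - 2*(X 1^2*X 2^1)) = u 2 := by
        rw [← hc]
        simp only [Fin.sum_univ_succ, Finset.univ_unique, Fin.default_eq_zero, Finset.sum_singleton,
          mono3, Matrix.cons_val_zero, Matrix.cons_val_succ, smul_eq_C_mul]
        simp only [fsl1, fsl2, fsl3, fsl4, fsl5, fsl6, fsl7, fsl8, fsl9]
        rw [hk20 ,hk22 ,hk25 ,hk26 ,hk27 ,hk28]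
        simp only [map_mul, map_neg, map_add, map_sub, map_ofNat, map_one, map_zero]
        ring
      refine ⟨![cc 1, cc 3, cc 4, cc 9], ?_⟩
      rw [Fin.sum_univ_four]
      show cc 1 • Wgen 0 + cc 3 • Wgen 1 + cc 4 • Wgen 2 + cc 9 • Wgen 3 = u
      have F0 : (cc 1 • Wgen 0 + cc 3 • Wgen 1 + cc 4 • Wgen 2 + cc 9 • Wgen 3) 0 = u 0 := by
        simp only [Pi.add_apply, Pi.smul_apply]
        show cc 1 • (X 0^1*X 1^1*X 2^1) + cc 3 • (X 1^2*X 2^1) + cc 4 • (X 1^1*X 2^2)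
          + cc 9 • (X 0^3 - 2*(X 0^1*X 1^2) - 2*(X 0^1*X 2^2)) = u 0
        simp only [smul_eq_C_mul]
        linear_combination comp0
      have F1 : (cc 1 • Wgen 0 + cc 3 • Wgen 1 + cc 4 • Wgen 2 + cc 9 • Wgen 3) 1 = u 1 := by
        simp only [Pi.add_apply, Pi.smul_apply]
        show cc 1 • (X 0^2*X 2^1) + cc 3 • (X 0^1*X 1^1*X 2^1) + cc 4 • (X 0^1*X 2^2)
          + cc 9 • (X 1^3 - 2*(X 0^2*X 1^1) - 2*(X 1^1*X 2^2)) = u 1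
        simp only [smul_eq_C_mul]
        linear_combination comp1
      have F2 : (cc 1 • Wgen 0 + cc 3 • Wgen 1 + cc 4 • Wgen 2 + cc 9 • Wgen 3) 2 = u 2 := by
        simp only [Pi.add_apply, Pi.smul_apply]
        show cc 1 • (X 0^2*X 1^1) + cc 3 • (X 0^1*X 1^2) + cc 4 • (X 0^1*X 1^1*X 2^1)
          + cc 9 • (X 2^3 - 2*(X 0^2*X 2^1) - 2*(X 1^2*X 2^1)) = u 2
        simp only [smul_eq_C_mul]
        linear_combination comp2
      funext k
      fin_cases k
      · exact F0
      · exact F1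
      · exact F2
    · rw [Submodule.span_le]
      rintro v ⟨j, rfl⟩
      exact hAR j
  have hli : LinearIndependent ℂ Wgen := by
    rw [Fintype.linearIndependent_iff]
    intro g hg
    have h0 := congrFun hg 0
    simp only [Fin.sum_univ_four, Pi.add_apply, Pi.smul_apply, Wgen, Matrix.cons_val_zero,
      Matrix.cons_val_one, Matrix.head_cons, Matrix.cons_val_two, Matrix.tail_cons,
      Matrix.cons_val_three, Pi.zero_apply, smul_eq_C_mul] at h0
    have I1 := congrArg (eval ![(1 : ℂ), 1, 1]) h0
    have I2 := congrArg (eval ![(1 : ℂ), 2, 3]) h0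
    have I3 := congrArg (eval ![(2 : ℂ), -1, 1]) h0
    have I4 := congrArg (eval ![(3 : ℂ), 1, -2]) h0
    simp only [map_add, map_mul, map_sub, map_neg, map_pow, map_ofNat, map_one, map_zero,
        eval_C, eval_X, Matrix.cons_val_zero, Matrix.cons_val_one, Matrix.head_cons,
        Matrix.cons_val_two, Matrix.tail_cons] at I1 I2 I3 I4
    intro i
    fin_cases i
    · show g 0 = 0
      linear_combination (1/13 : ℂ) * I1 + (-3/13 : ℂ) * I3 + (-1/13 : ℂ) * I4
    · show g 1 = 0
      linear_combination (-1/2 : ℂ) * I1 + (3/40 : ℂ) * I2 + (7/20 : ℂ) * I3 + (-1/8 : ℂ) * I4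
    · show g 2 = 0
      linear_combination (-17/26 : ℂ) * I1 + (3/40 : ℂ) * I2 + (-49/260 : ℂ) * I3 + (3/104 : ℂ) * I4
    · show g 3 = 0
      linear_combination (-9/13 : ℂ) * I1 + (1/20 : ℂ) * I2 + (-3/130 : ℂ) * I3 + (-3/52 : ℂ) * I4
  rw [hspan, finrank_span_eq_card hli, Fintype.card_fin]
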